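/- arXiv:1405.2461 — 7 statements merged into one kernel-verified Lean document; each statement's English description precedes it below -/
import Mathlib

section
/- Let 0 < ε ≤ 1/4 and 0 < δ ≤ 1/4. Let (X,d,x), (Y,d',y), (Z,d'',z) be pointed metric spaces, let φ: X → Y be an ε-isometry from (X,x) to (Y,y), and let ψ: Y → Z be a δ-isometry from (Y,y) to (Z,z). Then the composition ψ∘φ: X → Z is a 2(ε+δ)-isometry from (X,x) to (Z,z). -/
open Metric

/-- A map `φ : X → Y` is an `ε`-isometry from `(X,x)` to `(Y,y)` if it distorts
distances between points of `B(x, 1/ε)` by less than `ε`, and for every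
`ε ≤ r ≤ 1/ε`, every point of `B(y, r-ε)` lies within distance `ε` of a point
of `φ(B(x,r))`. -/
def IsEpsIsometry {X Y : Type*} [MetricSpace X] [MetricSpace Y]
    (ε : ℝ) (x : X) (y : Y) (φ : X → Y) : Prop :=
  (∀ a ∈ ball x (1 / ε), ∀ b ∈ ball x (1 / ε), |dist (φ a) (φ b) - dist a b| < ε) ∧
  ∀ r : ℝ, ε ≤ r → r ≤ 1 / ε → ∀ z ∈ ball y (r - ε),
    ∃ a ∈ ball x r, dist z (φ a) < ε

/-!
The distortion bounds simply add up along the composition, once one knows that `φ` maps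
`B(x, 1/(2(ε+δ)))` into the ball `B(y, 1/δ)` on which `ψ` is controlled; this follows because
`φ` nearly hits the basepoint `y` from a point close to `x`. For the density condition at scale
`r`, approximate a point of `Z` through `ψ` at scale `r - ε - δ`, then the resulting point of `Y`
through `φ` at scale `r - δ`.
-/

open Set

namespace IsEpsIsometry

variable {X Y Z : Type*} [MetricSpace X] [MetricSpace Y] [MetricSpace Z]
  {x : X} {y : Y} {z : Z} {ε δ : ℝ} {φ : X → Y} {ψ : Y → Z}

theorem exists_near_basepoint (hφ : IsEpsIsometry ε x y φ) (hε : 0 < ε)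
    (h2ε : 2 * ε ≤ 1 / ε) : ∃ a ∈ ball x (2 * ε), dist y (φ a) < ε :=
  hφ.2 (2 * ε) (by linarith) h2ε y (mem_ball_self (by linarith))

theorem mapsTo_ball (hφ : IsEpsIsometry ε x y φ) (hε : 0 < ε) (h2ε : 2 * ε ≤ 1 / ε)
    {R : ℝ} (hR : R ≤ 1 / ε) : MapsTo φ (ball x R) (ball y (R + 4 * ε)) := by
  obtain ⟨a₀, ha₀, hya₀⟩ := hφ.exists_near_basepoint hε h2ε
  intro c hc
  have hdist := (abs_lt.1 <| hφ.1 c (ball_subset_ball hR hc) a₀ (ball_subset_ball h2ε ha₀)).2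
  rw [mem_ball] at hc ha₀ ⊢
  calc dist (φ c) y ≤ dist (φ c) (φ a₀) + dist y (φ a₀) := dist_triangle_right _ _ _
    _ < dist c a₀ + 2 * ε := by linarith
    _ ≤ dist c x + dist a₀ x + 2 * ε := by gcongr; exact dist_triangle_right _ _ _
    _ < R + 4 * ε := by linarith

theorem abs_dist_comp_sub_lt (hφ : IsEpsIsometry ε x y φ) (hψ : IsEpsIsometry δ y z ψ)
    (hε : 0 < ε) (h2ε : 2 * ε ≤ 1 / ε) {R : ℝ} (hRε : R ≤ 1 / ε) (hRδ : R + 4 * ε ≤ 1 / δ)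
    {a b : X} (ha : a ∈ ball x R) (hb : b ∈ ball x R) :
    |dist (ψ (φ a)) (ψ (φ b)) - dist a b| < ε + δ := by
  have hYball : MapsTo φ (ball x R) (ball y (1 / δ)) :=
    (hφ.mapsTo_ball hε h2ε hRε).mono_right (ball_subset_ball hRδ)
  have hφab := hφ.1 a (ball_subset_ball hRε ha) b (ball_subset_ball hRε hb)
  have hψab := hψ.1 (φ a) (hYball ha) (φ b) (hYball hb)
  calc |dist (ψ (φ a)) (ψ (φ b)) - dist a b|
      ≤ |dist (ψ (φ a)) (ψ (φ b)) - dist (φ a) (φ b)| + |dist (φ a) (φ b) - dist a b| :=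
        abs_sub_le _ _ _
    _ < δ + ε := add_lt_add hψab hφab
    _ = ε + δ := add_comm δ ε

theorem exists_dist_comp_lt (hφ : IsEpsIsometry ε x y φ) (hψ : IsEpsIsometry δ y z ψ)
    (hε : 0 ≤ ε) {r : ℝ} (hr : ε + 2 * δ ≤ r) (hrε : r - δ ≤ 1 / ε) (hrδ : r - δ ≤ 1 / δ)
    {c : Z} (hc : c ∈ ball z (r - ε - 2 * δ)) :
    ∃ a ∈ ball x (r - δ), dist c (ψ (φ a)) < ε + 2 * δ := by
  obtain ⟨b, hb, hcb⟩ := hψ.2 (r - ε - δ) (by linarith) (by linarith) c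
    (by rw [mem_ball] at hc ⊢; linarith)
  have hδ : 0 < δ := dist_nonneg.trans_lt hcb
  obtain ⟨a, ha, hba⟩ := hφ.2 (r - δ) (by linarith) hrε b
    (by rw [mem_ball] at hb ⊢; linarith)
  refine ⟨a, ha, ?_⟩
  have hφa : φ a ∈ ball y (1 / δ) := by
    rw [mem_ball] at hb ⊢
    linarith [dist_triangle_left (φ a) y b]
  have hψ_ba := (abs_lt.1 <| hψ.1 b (ball_subset_ball (by linarith) hb) (φ a) hφa).2
  calc dist c (ψ (φ a)) ≤ dist c (ψ b) + dist (ψ b) (ψ (φ a)) := dist_triangle _ _ _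
    _ < ε + 2 * δ := by linarith

end IsEpsIsometry

/-- The composition of an `ε`-isometry and a `δ`-isometry (with `ε, δ ≤ 1/4`)
is a `2(ε+δ)`-isometry. -/
theorem composition_of_eps_isometries
    {X Y Z : Type*} [MetricSpace X] [MetricSpace Y] [MetricSpace Z]
    (x : X) (y : Y) (z : Z) (ε δ : ℝ)
    (hε : 0 < ε) (hε' : ε ≤ 1 / 4) (hδ : 0 < δ) (hδ' : δ ≤ 1 / 4)
    (φ : X → Y) (ψ : Y → Z)
    (hφ : IsEpsIsometry ε x y φ) (hψ : IsEpsIsometry δ y z ψ) :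
    IsEpsIsometry (2 * (ε + δ)) x z (ψ ∘ φ) := by
  have hinvε : 1 / (2 * (ε + δ)) ≤ 1 / ε := one_div_le_one_div_of_le hε (by linarith)
  have hinvδ : 1 / (2 * (ε + δ)) ≤ 1 / δ := one_div_le_one_div_of_le hδ (by linarith)
  have h2ε : 2 * ε ≤ 1 / ε := by rw [le_div_iff₀ hε]; nlinarith
  have hR : 1 / (2 * (ε + δ)) + 4 * ε ≤ 1 / δ := by
    rw [div_add' _ _ _ (by positivity), div_le_div_iff₀ (by positivity) hδ]
    nlinarith [mul_pos hε hδ]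
  refine ⟨fun a ha b hb => ?_, fun r hr₁ hr₂ c hc => ?_⟩
  · exact (hφ.abs_dist_comp_sub_lt hψ hε h2ε hinvε hR ha hb).trans (by linarith)
  · obtain ⟨a, ha, hca⟩ := hφ.exists_dist_comp_lt hψ hε.le (by linarith) (by linarith) (by linarith)
      (ball_subset_ball (by linarith) hc)
    exact ⟨a, ball_subset_ball (by linarith) ha, hca.trans (by linarith)⟩
end

section
/- For every n ≥ 1 and L ≥ 0 there is a constant C ≥ 7, depending only on L, with the following property. Let (X,d,x) and (Y,d',y) be pointed metric spaces with X doubling, let f: X → ℝⁿ and g: Y → ℝⁿ be L-Lipschitz maps, let 0 < ε < 1, and let φ: X → Y be an ε-isometry from (X,x) to (Y,y) such that φ(x) = y and ‖f(a) − g(φ(a))‖ < ε for every a ∈ B(x, 1/ε). Then there exists a map ψ: Y → X that is a Cε-isometry from (Y,y) to (X,x) and satisfies ‖g(b) − f(ψ(b))‖ ≤ Cε for every b ∈ B(y, 1/(Cε)). -/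
open Metric

/-- A metric space is doubling if there is `M` such that every ball of radius `2r`
can be covered by at most `M` balls of radius `r`. -/
def DoublingSpace (X : Type*) [MetricSpace X] : Prop :=
  ∃ M : ℕ, ∀ (x : X) (r : ℝ), ∃ t : Finset X,
    t.card ≤ M ∧ ball x (2 * r) ⊆ ⋃ c ∈ t, ball c r

/-- An approximate inverse of an `ε`-isometry compatible with Lipschitz functions
is a `Cε`-isometry compatible with the functions, with `C` depending only on `L`. -/
theorem approximate_inverse_of_eps_isometry (L : ℝ) (hL : 0 ≤ L) :
    ∃ C : ℝ, 7 ≤ C ∧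
      ∀ (n : ℕ), 1 ≤ n →
      ∀ (X Y : Type) [MetricSpace X] [MetricSpace Y],
        DoublingSpace X →
        ∀ (x : X) (y : Y) (f : X → EuclideanSpace ℝ (Fin n))
          (g : Y → EuclideanSpace ℝ (Fin n)),
          LipschitzWith (Real.toNNReal L) f →
          LipschitzWith (Real.toNNReal L) g →
          ∀ ε : ℝ, 0 < ε → ε < 1 →
          ∀ φ : X → Y, IsEpsIsometry ε x y φ → φ x = y →
            (∀ a ∈ ball x (1 / ε), ‖f a - g (φ a)‖ < ε) →
            ∃ ψ : Y → X, IsEpsIsometry (C * ε) y x ψ ∧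
              ∀ b ∈ ball y (1 / (C * ε)), ‖g b - f (ψ b)‖ ≤ C * ε := by
  refine ⟨2*L+7, by linarith, ?_⟩
  intro n _hn X Y _ _ _hdoub x y f g hf hg ε hε0 hε1 φ hφ hφx hfg
  classical
  set C := 2*L+7 with hC
  clear_value C
  have hC7 : (7:ℝ) ≤ C := by simp only [hC]; linarith
  have hCpos : 0 < C := by linarith
  have hη0 : 0 < C * ε := mul_pos hCpos hε0
  have hεinv : ε < 1/ε := by rw [lt_div_iff₀ hε0]; nlinarith
  have hεinv0 : 0 < 1/ε := by positivity
  have hLcoe : ((Real.toNNReal L : NNReal) : ℝ) = L := Real.coe_toNNReal L hL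
  have h7e : 7*ε ≤ C*ε := mul_le_mul_of_nonneg_right hC7 hε0.le
  have h1e : 1*ε < C*ε := mul_lt_mul_of_pos_right (by linarith) hε0
  -- covering property
  have hcov : ∀ b : Y, dist b y < 1/ε - ε → ∃ a ∈ ball x (1/ε), dist b (φ a) < ε := by
    intro b hb
    exact hφ.2 (1/ε) hεinv.le le_rfl b (by simpa [mem_ball] using hb)
  set ψ : Y → X := fun b =>
    if h : ∃ a ∈ ball x (1/ε), dist b (φ a) < ε then h.choose else x with hψdef
  have hψ1 : ∀ b : Y, dist b y < 1/ε - ε →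
      ψ b ∈ ball x (1/ε) ∧ dist b (φ (ψ b)) < ε := by
    intro b hb
    have h := hcov b hb
    simp only [hψdef, dif_pos h]
    exact ⟨h.choose_spec.1, h.choose_spec.2⟩
  have hψ2 : ∀ b : Y, dist (ψ b) x ≤ 1/ε := by
    intro b
    by_cases h : ∃ a ∈ ball x (1/ε), dist b (φ a) < ε
    · simp only [hψdef, dif_pos h]
      exact le_of_lt (mem_ball.mp h.choose_spec.1)
    · simp only [hψdef, dif_neg h, dist_self]
      linarith
  have hCinv : C * (1/C) = 1 := by field_simp
  have hsub2 : 1/(C*ε) ≤ 1/ε := by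
    apply one_div_le_one_div_of_le hε0
    linarith
  have hsubkey : ∀ h1 : ε*ε ≤ 1 - 1/C, 1/(C*ε) ≤ 1/ε - ε := by
    intro h1
    have h3 : 1/(C*ε) = (1/C) * (1/ε) := (one_div_mul_one_div C ε).symm
    have h4 : 1/ε - ε = (1 - ε*ε) * (1/ε) := by field_simp
    rw [h3, h4]
    exact mul_le_mul_of_nonneg_right (by linarith) hεinv0.le
  have hkey2 : ¬ (ε*ε ≤ 1 - 1/C) → C - 1 < C * ε := by
    intro h1
    push_neg at h1
    have h2 : C * (1 - 1/C) < C * (ε*ε) := mul_lt_mul_of_pos_left h1 hCpos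
    have h2' : C * (1 - 1/C) = C - 1 := by rw [mul_sub, mul_one, hCinv]
    have hεε : ε*ε < 1*ε := mul_lt_mul_of_pos_right hε1 hε0
    have h3 : C * (ε*ε) ≤ C * (1*ε) := mul_le_mul_of_nonneg_left hεε.le hCpos.le
    have h4 : C * (1*ε) = C*ε := by ring
    calc C - 1 = C*(1-1/C) := h2'.symm
      _ < C*(ε*ε) := h2
      _ ≤ C*(1*ε) := h3
      _ = C*ε := h4
  refine ⟨ψ, ⟨?_, ?_⟩, ?_⟩
  · -- distortion
    intro b hb b' hb'
    have hb2 : dist b y < 1/(C*ε) := mem_ball.mp hb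
    have hb2' : dist b' y < 1/(C*ε) := mem_ball.mp hb'
    by_cases h1 : ε*ε ≤ 1 - 1/C
    · have hsub := hsubkey h1
      obtain ⟨haB, ha⟩ := hψ1 b (lt_of_lt_of_le hb2 hsub)
      obtain ⟨haB', ha'⟩ := hψ1 b' (lt_of_lt_of_le hb2' hsub)
      obtain ⟨hd1, hd2⟩ := abs_lt.mp (hφ.1 _ haB _ haB')
      have t1 : dist (φ (ψ b)) (φ (ψ b')) ≤ dist (φ (ψ b)) b + dist b b' + dist b' (φ (ψ b')) :=
        dist_triangle4 _ _ _ _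
      have t2 : dist b b' ≤ dist b (φ (ψ b)) + dist (φ (ψ b)) (φ (ψ b')) + dist (φ (ψ b')) b' :=
        dist_triangle4 _ _ _ _
      have c1 : dist (φ (ψ b)) b = dist b (φ (ψ b)) := dist_comm _ _
      have c2 : dist (φ (ψ b')) b' = dist b' (φ (ψ b')) := dist_comm _ _
      rw [abs_sub_lt_iff]
      constructor <;> linarith
    · have hCε : C - 1 < C * ε := hkey2 h1
      have hA : dist (ψ b) (ψ b') ≤ 1/ε + 1/ε :=
        calc dist (ψ b) (ψ b') ≤ dist (ψ b) x + dist x (ψ b') := dist_triangle _ _ _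
          _ ≤ 1/ε + 1/ε := by
              rw [dist_comm x (ψ b')]
              exact add_le_add (hψ2 b) (hψ2 b')
      have hB : dist b b' < 1/(C*ε) + 1/(C*ε) :=
        calc dist b b' ≤ dist b y + dist y b' := dist_triangle _ _ _
          _ < 1/(C*ε) + 1/(C*ε) := by
              rw [dist_comm y b']
              exact add_lt_add hb2 hb2'
      -- since ε is close to 1 here, all distances are small compared to C*ε
      have hε67 : 6/7 < ε := by
        by_contra h
        push_neg at h
        have : C*ε ≤ C*(6/7) := mul_le_mul_of_nonneg_left h hCpos.le
        linarith
      have hu : 1/ε < 7/6 := by rw [div_lt_iff₀ hε0]; linarith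
      have hv : 1/(C*ε) < 1/6 := by rw [div_lt_iff₀ hη0]; linarith
      have hCε6 : (6:ℝ) < C*ε := by linarith
      rw [abs_sub_lt_iff]
      constructor
      · linarith [dist_nonneg (x := b) (y := b')]
      · linarith [dist_nonneg (x := ψ b) (y := ψ b')]
  · -- approximate surjectivity
    intro r hr1 hr2 z hz
    have hzx : dist z x < r - C*ε := mem_ball.mp hz
    have h2e : 2*ε ≤ C*ε := le_trans (by linarith) h7e
    have hzB : z ∈ ball x (1/ε) := by
      rw [mem_ball]
      have h5 : r ≤ 1/ε := le_trans hr2 hsub2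
      linarith
    have hxB : x ∈ ball x (1/ε) := mem_ball_self hεinv0
    have hd := hφ.1 z hzB x hxB
    rw [hφx] at hd
    obtain ⟨hd1, hd2⟩ := abs_lt.mp hd
    have hby : dist (φ z) y < r - C*ε + ε := by linarith
    have hbr : φ z ∈ ball y r := by
      rw [mem_ball]; linarith
    have hbsmall : dist (φ z) y < 1/ε - ε := by
      have h5 : r ≤ 1/(C*ε) := hr2
      linarith
    obtain ⟨haB, ha⟩ := hψ1 (φ z) hbsmall
    obtain ⟨hd31, hd32⟩ := abs_lt.mp (hφ.1 z hzB _ haB)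
    exact ⟨φ z, hbr, by linarith⟩
  · -- norm compatibility
    intro b hb
    have hb2 : dist b y < 1/(C*ε) := mem_ball.mp hb
    by_cases h1 : ε*ε ≤ 1 - 1/C
    · obtain ⟨haB, ha⟩ := hψ1 b (lt_of_lt_of_le hb2 (hsubkey h1))
      have l1 : ‖g b - g (φ (ψ b))‖ ≤ L * dist b (φ (ψ b)) := by
        rw [← dist_eq_norm, ← hLcoe]
        exact hg.dist_le_mul _ _
      have l2 : ‖g (φ (ψ b)) - f (ψ b)‖ < ε := by
        rw [norm_sub_rev]
        exact hfg _ haB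
      have l3 : L * dist b (φ (ψ b)) ≤ L * ε := mul_le_mul_of_nonneg_left ha.le hL
      have l4 : (L+1) * ε ≤ C * ε :=
        mul_le_mul_of_nonneg_right (by simp only [hC]; linarith) hε0.le
      have l5 : (L+1) * ε = L * ε + ε := by ring
      calc ‖g b - f (ψ b)‖ ≤ ‖g b - g (φ (ψ b))‖ + ‖g (φ (ψ b)) - f (ψ b)‖ :=
            norm_sub_le_norm_sub_add_norm_sub _ _ _
        _ ≤ C * ε := by linarith
    · have hCε : C - 1 < C * ε := hkey2 h1
      have hε67 : 6/7 < ε := by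
        by_contra h
        push_neg at h
        have : C*ε ≤ C*(6/7) := mul_le_mul_of_nonneg_left h hCpos.le
        linarith
      have hu : 1/ε < 7/6 := by rw [div_lt_iff₀ hε0]; linarith
      have hv : 1/(C*ε) < 1/6 := by rw [div_lt_iff₀ hη0]; linarith
      have l1 : ‖g b - g y‖ ≤ L * dist b y := by
        rw [← dist_eq_norm, ← hLcoe]; exact hg.dist_le_mul _ _
      have l2 : ‖g y - f x‖ < ε := by
        rw [norm_sub_rev, ← hφx]
        exact hfg x (mem_ball_self hεinv0)
      have l3 : ‖f x - f (ψ b)‖ ≤ L * dist x (ψ b) := by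
        rw [← dist_eq_norm, ← hLcoe]; exact hf.dist_le_mul _ _
      have m1 : L * dist b y ≤ L * (1/6) :=
        mul_le_mul_of_nonneg_left (by linarith) hL
      have m2 : L * dist x (ψ b) ≤ L * (7/6) := by
        apply mul_le_mul_of_nonneg_left _ hL
        have h6 := hψ2 b
        rw [dist_comm]
        linarith
      calc ‖g b - f (ψ b)‖ ≤ ‖g b - g y‖ + ‖g y - f x‖ + ‖f x - f (ψ b)‖ := by
            have t1 := norm_sub_le_norm_sub_add_norm_sub (g b) (g y) (f (ψ b))
            have t2 := norm_sub_le_norm_sub_add_norm_sub (g y) (f x) (f (ψ b))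
            linarith
        _ ≤ C * ε := by
            simp only [hC] at hCε ⊢
            linarith
end

section
/- Let (X,d,x) and (Y,d',y) be pointed metric spaces that are complete and doubling, and let f: X → ℝⁿ and g: Y → ℝⁿ be Lipschitz maps. Suppose that for every integer i ≥ 1 there exists a (1/i)-isometry φᵢ: X → Y from (X,x) to (Y,y) such that ‖f(a) − g(φᵢ(a))‖ < 1/i for every a ∈ B(x, i). Then there exists a surjective isometry ι: X → Y with ι(x) = y and g(ι(a)) = f(a) for all a ∈ X. -/
/-! Complete doubling spaces are proper. Along a nonprincipal ultrafilter on `ℕ`, the orbit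
`i ↦ φᵢ a` of each point stays in a fixed ball of `Y`, hence has a limit `ι a`; since the
distortion of `φᵢ` on `B(x, i)` tends to zero locally uniformly, `ι` is an isometry fixing the
base points, and `g ∘ ι = f` by continuity of `g`. A point `z ∈ Y` is the limit of `φᵢ aᵢ` with
all `aᵢ` in one ball of `X`; the ultralimit `w` of the `aᵢ` then satisfies `ι w = z`. -/

open Metric

open Filter Topology

theorem DoublingSpace.exists_finset_ball_pow_mul_subset {X : Type*} [MetricSpace X]
    (hX : DoublingSpace X) (k : ℕ) (x : X) (r : ℝ) :
    ∃ t : Finset X, ball x (2 ^ k * r) ⊆ ⋃ c ∈ t, ball c r := by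
  induction k generalizing x with
  | zero => exact ⟨{x}, by simp⟩
  | succ k ih =>
    classical
    obtain ⟨M, hM⟩ := hX
    obtain ⟨s, -, hs⟩ := hM x (2 ^ k * r)
    choose t ht using ih
    refine ⟨s.biUnion t, fun z hz => ?_⟩
    rw [pow_succ', mul_assoc] at hz
    obtain ⟨c, hc, hzc⟩ := Set.mem_iUnion₂.1 (hs hz)
    obtain ⟨d, hd, hzd⟩ := Set.mem_iUnion₂.1 (ht c hzc)
    exact Set.mem_iUnion₂.2 ⟨d, Finset.mem_biUnion.2 ⟨c, hc, hd⟩, hzd⟩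

theorem DoublingSpace.totallyBounded_ball {X : Type*} [MetricSpace X] (hX : DoublingSpace X)
    (x : X) (R : ℝ) : TotallyBounded (ball x R) := by
  refine totallyBounded_iff.2 fun ε hε => ?_
  obtain ⟨k, hk⟩ := pow_unbounded_of_one_lt (R / ε) one_lt_two
  obtain ⟨t, ht⟩ := hX.exists_finset_ball_pow_mul_subset k x ε
  exact ⟨t, t.finite_toSet, (ball_subset_ball ((div_lt_iff₀ hε).1 hk).le).trans ht⟩

theorem DoublingSpace.properSpace {X : Type*} [MetricSpace X] [CompleteSpace X]
    (hX : DoublingSpace X) : ProperSpace X :=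
  ⟨fun x r => ((hX.totallyBounded_ball x (r + 1)).subset
    (closedBall_subset_ball (lt_add_one r))).isCompact_of_isClosed isClosed_closedBall⟩

theorem tendsto_of_eventually_dist_le {α Y : Type*} [PseudoMetricSpace Y] {l : Filter α}
    {u : α → Y} {z : Y} {v : α → ℝ} (h : ∀ᶠ i in l, dist (u i) z ≤ v i)
    (hv : Tendsto v l (𝓝 0)) : Tendsto u l (𝓝 z) :=
  tendsto_iff_dist_tendsto_zero.2 (squeeze_zero' (.of_forall fun _ => dist_nonneg) h hv)

theorem Ultrafilter.exists_tendsto_of_eventually_dist_le {α Y : Type*} [PseudoMetricSpace Y]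
    [ProperSpace Y] {U : Ultrafilter α} {u : α → Y} {y : Y} {R : ℝ}
    (h : ∀ᶠ i in U, dist (u i) y ≤ R) : ∃ z, Tendsto u U (𝓝 z) :=
  let ⟨z, _, hz⟩ := (isCompact_closedBall y R).ultrafilter_le_nhds (U.map u) (le_principal_iff.2 h)
  ⟨z, hz⟩

section UltrafilterLimit

variable {α X Y : Type*} [MetricSpace X] [MetricSpace Y] {U : Ultrafilter α} {Φ : α → X → Y}

theorem exists_isometry_tendsto_of_tendstoLocallyUniformly_dist [ProperSpace Y] {x : X} {y : Y}
    (hΦ : TendstoLocallyUniformly (fun i (p : X × X) => dist (Φ i p.1) (Φ i p.2))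
      (fun p => dist p.1 p.2) U)
    (hx : Tendsto (fun i => Φ i x) U (𝓝 y)) :
    ∃ ι : X → Y, Isometry ι ∧ ι x = y ∧ ∀ a, Tendsto (fun i => Φ i a) U (𝓝 (ι a)) := by
  have hdist (a b : X) : Tendsto (fun i => dist (Φ i a) (Φ i b)) U (𝓝 (dist a b)) :=
    hΦ.tendsto_comp (f := fun p : X × X => dist p.1 p.2) continuous_dist.continuousAt
      (tendsto_const_nhds (x := (a, b)))
  have hlim (a : X) : ∃ z, Tendsto (fun i => Φ i a) U (𝓝 z) := by
    refine Ultrafilter.exists_tendsto_of_eventually_dist_le (y := y) (R := dist a x + 2) ?_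
    filter_upwards [(hdist a x).eventually (gt_mem_nhds (lt_add_one _)),
      Metric.tendsto_nhds.1 hx 1 one_pos] with i hax hxy
    linarith [dist_triangle (Φ i a) (Φ i x) y]
  choose ι hι using hlim
  exact ⟨ι, Isometry.of_dist_eq fun a b => tendsto_nhds_unique ((hι a).dist (hι b)) (hdist a b),
    tendsto_nhds_unique (hι x) hx, hι⟩

theorem surjective_of_tendstoLocallyUniformly_dist [ProperSpace X] {x : X} {ι : X → Y}
    (hΦ : TendstoLocallyUniformly (fun i (p : X × X) => dist (Φ i p.1) (Φ i p.2))
      (fun p => dist p.1 p.2) U)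
    (hι : ∀ a, Tendsto (fun i => Φ i a) U (𝓝 (ι a)))
    (hsurj : ∀ z, ∃ A : α → X, (∃ R, ∀ᶠ i in U, dist (A i) x ≤ R) ∧
      Tendsto (fun i => Φ i (A i)) U (𝓝 z)) :
    Function.Surjective ι := by
  intro z
  obtain ⟨A, ⟨R, hAR⟩, hA⟩ := hsurj z
  obtain ⟨w, hw⟩ := Ultrafilter.exists_tendsto_of_eventually_dist_le hAR
  have hdist : Tendsto (fun i => dist (Φ i w) (Φ i (A i))) U (𝓝 0) := by
    simpa using hΦ.tendsto_comp (f := fun p : X × X => dist p.1 p.2)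
      continuous_dist.continuousAt ((tendsto_const_nhds (x := w)).prodMk_nhds hw)
  exact ⟨w, tendsto_nhds_unique ((hι w).congr_dist hdist) hA⟩

end UltrafilterLimit

namespace IsEpsIsometry

variable {X Y : Type*} [MetricSpace X] [MetricSpace Y] {ε : ℝ} {x : X} {y : Y} {φ : X → Y}

theorem dist_lt_dist_add (hφ : IsEpsIsometry ε x y φ) {a b : X} (ha : a ∈ ball x (1 / ε))
    (hb : b ∈ ball x (1 / ε)) : dist (φ a) (φ b) < dist a b + ε := by
  linarith [(abs_sub_lt_iff.1 (hφ.1 a ha b hb)).1]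

theorem dist_apply_basepoint_lt (hφ : IsEpsIsometry ε x y φ) (hε : 0 < ε) (hε' : ε ≤ 1 / 2) :
    dist (φ x) y < 4 * ε := by
  have h2ε : 2 * ε ≤ 1 / ε := by
    linarith [one_le_one_div hε (by linarith : ε ≤ 1)]
  obtain ⟨a, ha, hya⟩ := hφ.2 (2 * ε) (by linarith) h2ε y (mem_ball_self (by linarith))
  have hxa := hφ.dist_lt_dist_add (mem_ball_self (by positivity)) (ball_subset_ball h2ε ha)
  linarith [dist_triangle (φ x) (φ a) y, dist_comm (φ a) y, dist_comm x a, mem_ball.1 ha]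

theorem exists_mem_ball_dist_lt (hφ : IsEpsIsometry ε x y φ) (hε : ε < 1) (z : Y)
    (hz : dist z y + 1 ≤ 1 / ε) : ∃ a ∈ ball x (dist z y + 1), dist z (φ a) < ε :=
  hφ.2 _ (by linarith [dist_nonneg (x := z) (y := y)]) hz z (mem_ball.2 (by linarith))

end IsEpsIsometry

section EpsIsometrySequence

variable {α X Y : Type*} [MetricSpace X] [MetricSpace Y] {l : Filter α} {ε : α → ℝ}
  {Φ : α → X → Y} {x : X} {y : Y}

theorem tendstoLocallyUniformly_dist_of_isEpsIsometry (hε : Tendsto ε l (𝓝[>] 0))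
    (hΦ : ∀ᶠ i in l, IsEpsIsometry (ε i) x y (Φ i)) :
    TendstoLocallyUniformly (fun i (p : X × X) => dist (Φ i p.1) (Φ i p.2))
      (fun p => dist p.1 p.2) l := by
  refine Metric.tendstoLocallyUniformly_iff.2 fun δ hδ p => ?_
  set R := max (dist p.1 x) (dist p.2 x) + 1
  have hp : p ∈ ball x R ×ˢ ball x R :=
    ⟨mem_ball.2 (by grind), mem_ball.2 (by grind)⟩
  refine ⟨_, (isOpen_ball.prod isOpen_ball).mem_nhds hp, ?_⟩
  filter_upwards [hΦ, (tendsto_nhds_of_tendsto_nhdsWithin hε).eventually (gt_mem_nhds hδ),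
    (tendsto_inv_nhdsGT_zero.comp hε).eventually_ge_atTop R] with i hi hiδ hiR q hq
  rw [Function.comp_apply, ← one_div] at hiR
  rw [dist_comm, Real.dist_eq]
  exact (hi.1 q.1 (ball_subset_ball hiR hq.1) q.2 (ball_subset_ball hiR hq.2)).trans hiδ

theorem tendsto_apply_basepoint_of_isEpsIsometry (hε : Tendsto ε l (𝓝[>] 0))
    (hΦ : ∀ᶠ i in l, IsEpsIsometry (ε i) x y (Φ i)) :
    Tendsto (fun i => Φ i x) l (𝓝 y) := by
  have hε0 := tendsto_nhds_of_tendsto_nhdsWithin hε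
  refine tendsto_of_eventually_dist_le ?_ (by simpa using hε0.const_mul 4)
  filter_upwards [hΦ, hε self_mem_nhdsWithin, hε0.eventually (ge_mem_nhds one_half_pos)]
    with i hi hi0 hi2
  exact (hi.dist_apply_basepoint_lt hi0 hi2).le

theorem exists_tendsto_apply_of_isEpsIsometry [l.NeBot] (hε : Tendsto ε l (𝓝[>] 0))
    (hΦ : ∀ᶠ i in l, IsEpsIsometry (ε i) x y (Φ i)) (z : Y) :
    ∃ A : α → X, (∃ R, ∀ᶠ i in l, dist (A i) x ≤ R) ∧ Tendsto (fun i => Φ i (A i)) l (𝓝 z) := by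
  have hε0 := tendsto_nhds_of_tendsto_nhdsWithin hε
  have hA : ∀ᶠ i in l, ∃ a, a ∈ ball x (dist z y + 1) ∧ dist z (Φ i a) < ε i := by
    filter_upwards [hΦ, hε0.eventually (gt_mem_nhds one_pos),
      (tendsto_inv_nhdsGT_zero.comp hε).eventually_ge_atTop (dist z y + 1)] with i hi hi1 hiR
    exact hi.exists_mem_ball_dist_lt hi1 z (by rwa [one_div])
  obtain ⟨A, hA⟩ := hA.choice
  refine ⟨A, ⟨dist z y + 1, hA.mono fun i hi => (mem_ball.1 hi.1).le⟩,
    tendsto_of_eventually_dist_le (hA.mono fun i hi => ?_) hε0⟩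
  rw [dist_comm]
  exact hi.2.le

theorem exists_surjective_isometry_tendsto_of_isEpsIsometry [ProperSpace X] [ProperSpace Y]
    {U : Ultrafilter α} (hε : Tendsto ε U (𝓝[>] 0))
    (hΦ : ∀ᶠ i in U, IsEpsIsometry (ε i) x y (Φ i)) :
    ∃ ι : X → Y, Isometry ι ∧ Function.Surjective ι ∧ ι x = y ∧
      ∀ a, Tendsto (fun i => Φ i a) U (𝓝 (ι a)) := by
  have hdist := tendstoLocallyUniformly_dist_of_isEpsIsometry hε hΦ
  obtain ⟨ι, hιiso, hιx, hι⟩ := exists_isometry_tendsto_of_tendstoLocallyUniformly_dist hdist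
    (tendsto_apply_basepoint_of_isEpsIsometry hε hΦ)
  exact ⟨ι, hιiso, surjective_of_tendstoLocallyUniformly_dist hdist hι
    (exists_tendsto_apply_of_isEpsIsometry hε hΦ), hιx, hι⟩

end EpsIsometrySequence

theorem isometry_of_vanishing_distance_general
    {X Y : Type*} [MetricSpace X] [MetricSpace Y]
    [CompleteSpace X] [CompleteSpace Y]
    (hX : DoublingSpace X) (hY : DoublingSpace Y)
    (x : X) (y : Y) (n : ℕ)
    (f : X → EuclideanSpace ℝ (Fin n)) (g : Y → EuclideanSpace ℝ (Fin n))
    (hg : ∃ K : NNReal, LipschitzWith K g)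
    (h : ∀ i : ℕ, 1 ≤ i → ∃ φ : X → Y,
      IsEpsIsometry (1 / (i : ℝ)) x y φ ∧
      ∀ a ∈ ball x (i : ℝ), ‖f a - g (φ a)‖ < 1 / (i : ℝ)) :
    ∃ ι : X → Y, Isometry ι ∧ Function.Surjective ι ∧ ι x = y ∧
      ∀ a : X, g (ι a) = f a := by
  have := hX.properSpace
  have := hY.properSpace
  have : Nonempty Y := ⟨y⟩
  obtain ⟨K, hK⟩ := hg
  choose! Φ hΦ hΦf using h
  let U := Ultrafilter.of (atTop : Filter ℕ)
  have hU : (U : Filter ℕ) ≤ atTop := Ultrafilter.of_le _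
  have hε : Tendsto (fun i : ℕ => 1 / (i : ℝ)) U (𝓝[>] 0) :=
    tendsto_nhdsWithin_iff.2 ⟨tendsto_one_div_atTop_nhds_zero_nat.mono_left hU,
      hU (eventually_gt_atTop 0 |>.mono fun i hi => by simpa using hi)⟩
  have hball (a : X) : ∀ᶠ i : ℕ in U, 1 ≤ i ∧ a ∈ ball x (i : ℝ) :=
    hU ((eventually_ge_atTop 1).and (tendsto_natCast_atTop_atTop.eventually_gt_atTop (dist a x)))
  obtain ⟨ι, hιiso, hιsurj, hιx, hι⟩ := exists_surjective_isometry_tendsto_of_isEpsIsometry hε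
    ((hball x).mono fun i hi => hΦ i hi.1)
  refine ⟨ι, hιiso, hιsurj, hιx, fun a => ?_⟩
  have hgΦ : Tendsto (fun i => g (Φ i a)) U (𝓝 (f a)) := by
    refine tendsto_of_eventually_dist_le ((hball a).mono fun i hi => ?_)
      (tendsto_nhds_of_tendsto_nhdsWithin hε)
    rw [dist_comm, dist_eq_norm]
    exact (hΦf i hi.1 a hi.2).le
  exact tendsto_nhds_unique ((hK.continuous.tendsto _).comp (hι a)) hgΦ

/-- If two complete doubling pointed space-functions are at distance zero, i.e. there
are `(1/i)`-isometries compatible with the functions for every `i ≥ 1`, then there is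
a surjective base-point preserving isometry intertwining the two functions. -/
theorem isometry_of_vanishing_distance
    {X Y : Type*} [MetricSpace X] [MetricSpace Y]
    [CompleteSpace X] [CompleteSpace Y]
    (hX : DoublingSpace X) (hY : DoublingSpace Y)
    (x : X) (y : Y) (n : ℕ)
    (f : X → EuclideanSpace ℝ (Fin n)) (g : Y → EuclideanSpace ℝ (Fin n))
    (hf : ∃ K : NNReal, LipschitzWith K f) (hg : ∃ K : NNReal, LipschitzWith K g)
    (h : ∀ i : ℕ, 1 ≤ i → ∃ φ : X → Y,
      IsEpsIsometry (1 / (i : ℝ)) x y φ ∧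
      ∀ a ∈ ball x (i : ℝ), ‖f a - g (φ a)‖ < 1 / (i : ℝ)) :
    ∃ ι : X → Y, Isometry ι ∧ Function.Surjective ι ∧ ι x = y ∧
      ∀ a : X, g (ι a) = f a :=
  isometry_of_vanishing_distance_general hX hY x y n f g hg h
end

section
/- Let n ≥ 1, let L ≥ 1, let (Y,d) be a metric space, and let G: Y → ℝⁿ be a map. Suppose that for every z ∈ Y and every i ∈ {1,…,n} there exists an L-bi-Lipschitz line l: ℝ → Y with l(0) = z and G(l(t)) = G(z) + t·eᵢ for all t ∈ ℝ, where eᵢ denotes the i-th standard basis vector of ℝⁿ. Then for every z ∈ Y and every p ∈ ℝⁿ there exists w ∈ Y with G(w) = p and d(z, w) ≤ L·√n·‖G(z) − p‖, where ‖·‖ is the Euclidean norm. -/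
/-! Move from `z` one coordinate at a time: the line in direction `eᵢ` through the current point
changes the `i`-th coordinate of `G` to `pᵢ` at cost at most `L |G(z)ᵢ - pᵢ|`, so `n` moves reach
`p` at distance at most `L ‖G z - p‖₁ ≤ L √n ‖G z - p‖₂`. -/

open Finset

theorem EuclideanSpace.sum_abs_le_sqrt_card_mul_norm {ι : Type*} [Fintype ι]
    (x : EuclideanSpace ℝ ι) : ∑ i, |x i| ≤ √(Fintype.card ι) * ‖x‖ := by
  rw [EuclideanSpace.norm_eq, ← Real.sqrt_mul (Nat.cast_nonneg _)]
  apply Real.le_sqrt_of_sq_le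
  simpa using sq_sum_le_card_mul_sum_sq (s := univ) (f := fun i => |x i|)

theorem exists_map_eq_add_sum_smul_dist_le {Y E ι : Type*}
    [PseudoMetricSpace Y] [AddCommGroup E] [Module ℝ E] (G : Y → E) (e : ι → E) (L : ℝ)
    (hmove : ∀ (z : Y) (i : ι) (t : ℝ), ∃ w, G w = G z + t • e i ∧ dist z w ≤ L * |t|)
    (z : Y) (c : ι → ℝ) (s : Finset ι) :
    ∃ w, G w = G z + ∑ i ∈ s, c i • e i ∧ dist z w ≤ L * ∑ i ∈ s, |c i| := by
  classical
  induction s using Finset.induction_on with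
  | empty => exact ⟨z, by simp, by simp⟩
  | insert i s hi ih =>
    obtain ⟨w, hGw, hzw⟩ := ih
    obtain ⟨w', hGw', hww'⟩ := hmove w i (c i)
    refine ⟨w', by rw [hGw', hGw, sum_insert hi]; abel, ?_⟩
    calc dist z w' ≤ dist z w + dist w w' := dist_triangle _ _ _
      _ ≤ L * ∑ j ∈ s, |c j| + L * |c i| := add_le_add hzw hww'
      _ = L * ∑ j ∈ insert i s, |c j| := by rw [sum_insert hi]; ring

theorem reach_value_along_biLipschitz_lines_general
    {Y : Type*} [MetricSpace Y] (n : ℕ) (L : ℝ) (hL : 1 ≤ L)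
    (G : Y → EuclideanSpace ℝ (Fin n))
    (h : ∀ (z : Y) (i : Fin n), ∃ l : ℝ → Y, l 0 = z ∧
      (∀ s t : ℝ, L⁻¹ * |s - t| ≤ dist (l s) (l t) ∧ dist (l s) (l t) ≤ L * |s - t|) ∧
      (∀ t : ℝ, G (l t) = G z + t • EuclideanSpace.single i (1 : ℝ))) :
    ∀ (z : Y) (p : EuclideanSpace ℝ (Fin n)), ∃ w : Y,
      G w = p ∧ dist z w ≤ L * Real.sqrt n * ‖G z - p‖ := by
  intro z p
  have hmove : ∀ (z : Y) (i : Fin n) (t : ℝ), ∃ w,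
      G w = G z + t • EuclideanSpace.single i (1 : ℝ) ∧ dist z w ≤ L * |t| := by
    intro z i t
    obtain ⟨l, hl0, hlip, hG⟩ := h z i
    refine ⟨l t, hG t, ?_⟩
    simpa [hl0] using (hlip 0 t).2
  obtain ⟨w, hGw, hzw⟩ := exists_map_eq_add_sum_smul_dist_le G
    (fun i => EuclideanSpace.single i 1) L hmove z (fun i => (p - G z) i) univ
  have hsum := (EuclideanSpace.basisFun (Fin n) ℝ).sum_repr (p - G z)
  simp only [EuclideanSpace.basisFun_repr, EuclideanSpace.basisFun_apply] at hsum
  refine ⟨w, by rw [hGw, hsum]; abel, ?_⟩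
  calc dist z w ≤ L * ∑ i, |(p - G z) i| := hzw
    _ ≤ L * (√n * ‖G z - p‖) := by
      gcongr
      simpa [norm_sub_rev] using EuclideanSpace.sum_abs_le_sqrt_card_mul_norm (p - G z)
    _ = L * √n * ‖G z - p‖ := by ring

/-- If through every point of `Y` there pass `L`-bi-Lipschitz lines along which
`G` moves linearly in each of the `n` coordinate directions, then every value
`p ∈ ℝⁿ` is attained at distance at most `L √n ‖G z − p‖` from any point `z`. -/
theorem reach_value_along_biLipschitz_lines
    {Y : Type*} [MetricSpace Y] (n : ℕ) (hn : 1 ≤ n) (L : ℝ) (hL : 1 ≤ L)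
    (G : Y → EuclideanSpace ℝ (Fin n))
    (h : ∀ (z : Y) (i : Fin n), ∃ l : ℝ → Y, l 0 = z ∧
      (∀ s t : ℝ, L⁻¹ * |s - t| ≤ dist (l s) (l t) ∧ dist (l s) (l t) ≤ L * |s - t|) ∧
      (∀ t : ℝ, G (l t) = G z + t • EuclideanSpace.single i (1 : ℝ))) :
    ∀ (z : Y) (p : EuclideanSpace ℝ (Fin n)), ∃ w : Y,
      G w = p ∧ dist z w ≤ L * Real.sqrt n * ‖G z - p‖ :=
  reach_value_along_biLipschitz_lines_general n L hL G h
end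

section
/- Let n ≥ 1, let (Y,d) be a nonempty metric space, let G: Y → ℝⁿ be a Lipschitz map, let v₁,…,vₙ be linearly independent vectors in ℝⁿ, and let L ≥ 1. Suppose that for every z ∈ Y and every i ∈ {1,…,n} there exists an L-bi-Lipschitz line l: ℝ → Y with l(0) = z and G(l(t)) = G(z) + t·vᵢ for all t ∈ ℝ. Then G is a surjective Lipschitz quotient map: G(Y) = ℝⁿ and there exists c > 0 such that G(B(z,r)) ⊇ B(G(z), cr) for every z ∈ Y and every r > 0. -/
/-!
Moving along the line through `z` in direction `vᵢ` for time `t` changes `G` by `t • vᵢ` and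
costs distance at most `L |t|`. Chaining one such move per basis direction reaches any prescribed
value `G z + w` at distance at most `L ∑ |cᵢ|` from `z`, where `cᵢ` are the coordinates of `w` in the
basis `v`; equivalence of norms in finite dimension bounds `∑ |cᵢ|` by a multiple of `‖w‖`.
-/

open Metric Module

section

variable {Y E ι : Type*} [PseudoMetricSpace Y]

theorem exists_map_eq_add_sum_smul_of_step [AddCommMonoid E] [Module ℝ E]
    {G : Y → E} {v : ι → E} {L : ℝ}
    (hstep : ∀ z i t, ∃ y, G y = G z + t • v i ∧ dist z y ≤ L * |t|)
    (c : ι → ℝ) (s : Finset ι) (z : Y) :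
    ∃ y, G y = G z + ∑ i ∈ s, c i • v i ∧ dist z y ≤ L * ∑ i ∈ s, |c i| := by
  classical
  induction s using Finset.induction_on generalizing z with
  | empty => exact ⟨z, by simp, by simp⟩
  | @insert i s hi ih =>
    obtain ⟨x, hx, hzx⟩ := hstep z i (c i)
    obtain ⟨y, hy, hxy⟩ := ih x
    refine ⟨y, by rw [hy, hx, Finset.sum_insert hi, add_assoc], ?_⟩
    calc dist z y ≤ dist z x + dist x y := dist_triangle _ _ _
      _ ≤ L * |c i| + L * ∑ j ∈ s, |c j| := add_le_add hzx hxy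
      _ = L * ∑ j ∈ insert i s, |c j| := by rw [Finset.sum_insert hi, mul_add]

variable [NormedAddCommGroup E] [NormedSpace ℝ E] [Fintype ι]

theorem Module.Basis.exists_sum_abs_repr_le (b : Basis ι ℝ E) :
    ∃ C > 0, ∀ w, ∑ i, |b.repr w i| ≤ C * ‖w‖ := by
  set φ := b.equivFunL.toContinuousLinearMap
  refine ⟨Fintype.card ι * ‖φ‖ + 1, by positivity, fun w => ?_⟩
  calc ∑ i, |b.repr w i| = ∑ i, ‖φ w i‖ := rfl
    _ ≤ Fintype.card ι * ‖φ w‖ := by simpa using Pi.sum_norm_apply_le_norm (φ w)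
    _ ≤ Fintype.card ι * (‖φ‖ * ‖w‖) := by gcongr; exact φ.le_opNorm w
    _ ≤ (Fintype.card ι * ‖φ‖ + 1) * ‖w‖ := by nlinarith [norm_nonneg w]

theorem exists_map_eq_add_of_step_basis (b : Basis ι ℝ E) {G : Y → E} {L : ℝ} (hL : 0 < L)
    (hstep : ∀ z i t, ∃ y, G y = G z + t • b i ∧ dist z y ≤ L * |t|) :
    ∃ M > 0, ∀ z w, ∃ y, G y = G z + w ∧ dist z y ≤ M * ‖w‖ := by
  obtain ⟨C, hC, hrepr⟩ := b.exists_sum_abs_repr_le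
  refine ⟨L * C, mul_pos hL hC, fun z w => ?_⟩
  obtain ⟨y, hy, hzy⟩ := exists_map_eq_add_sum_smul_of_step hstep (b.repr w) Finset.univ z
  refine ⟨y, by rw [hy, b.sum_repr], ?_⟩
  calc dist z y ≤ L * ∑ i, |b.repr w i| := hzy
    _ ≤ L * (C * ‖w‖) := by gcongr; exact hrepr w
    _ = L * C * ‖w‖ := (mul_assoc _ _ _).symm

end

theorem ball_subset_image_ball_of_exists_map_eq_add {Y E : Type*} [PseudoMetricSpace Y]
    [SeminormedAddCommGroup E] {G : Y → E} {M : ℝ} (hM : 0 < M)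
    (hG : ∀ z w, ∃ y, G y = G z + w ∧ dist z y ≤ M * ‖w‖) (z : Y) (r : ℝ) :
    ball (G z) (M⁻¹ * r) ⊆ G '' ball z r := by
  intro u hu
  obtain ⟨y, hy, hzy⟩ := hG z (u - G z)
  refine ⟨y, mem_ball'.2 ?_, by rw [hy, add_sub_cancel]⟩
  calc dist z y ≤ M * ‖u - G z‖ := hzy
    _ < M * (M⁻¹ * r) := by gcongr; rwa [← dist_eq_norm, ← mem_ball]
    _ = r := by field_simp

theorem lipschitz_quotient_of_biLipschitz_lines_general
    {Y : Type*} [MetricSpace Y] [Nonempty Y] (n : ℕ)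
    (G : Y → EuclideanSpace ℝ (Fin n))
    (v : Fin n → EuclideanSpace ℝ (Fin n)) (hv : LinearIndependent ℝ v)
    (L : ℝ) (hL : 1 ≤ L)
    (h : ∀ (z : Y) (i : Fin n), ∃ l : ℝ → Y, l 0 = z ∧
      (∀ s t : ℝ, L⁻¹ * |s - t| ≤ dist (l s) (l t) ∧ dist (l s) (l t) ≤ L * |s - t|) ∧
      (∀ t : ℝ, G (l t) = G z + t • v i)) :
    Function.Surjective G ∧ ∃ c : ℝ, 0 < c ∧
      ∀ (z : Y) (r : ℝ), 0 < r → ball (G z) (c * r) ⊆ G '' ball z r := by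
  let b := basisOfLinearIndependentOfCardEqFinrank' v hv (by simp)
  have hstep : ∀ z i t, ∃ y, G y = G z + t • b i ∧ dist z y ≤ L * |t| := by
    intro z i t
    obtain ⟨l, hl0, hdist, hGl⟩ := h z i
    refine ⟨l t, by simp [b, hGl], ?_⟩
    simpa [hl0] using (hdist 0 t).2
  obtain ⟨M, hM, hGM⟩ := exists_map_eq_add_of_step_basis b (by linarith) hstep
  refine ⟨fun u => ?_, M⁻¹, inv_pos.2 hM, fun z r _ =>
    ball_subset_image_ball_of_exists_map_eq_add hM hGM z r⟩
  obtain ⟨z⟩ := ‹Nonempty Y›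
  obtain ⟨y, hy, -⟩ := hGM z (u - G z)
  exact ⟨y, by rw [hy, add_sub_cancel]⟩

/-- If a Lipschitz map `G : Y → ℝⁿ` admits, through every point, `L`-bi-Lipschitz
lines along which it moves linearly in `n` linearly independent directions, then
`G` is a surjective Lipschitz quotient map. -/
theorem lipschitz_quotient_of_biLipschitz_lines
    {Y : Type*} [MetricSpace Y] [Nonempty Y] (n : ℕ) (hn : 1 ≤ n)
    (G : Y → EuclideanSpace ℝ (Fin n)) (hG : ∃ K : NNReal, LipschitzWith K G)
    (v : Fin n → EuclideanSpace ℝ (Fin n)) (hv : LinearIndependent ℝ v)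
    (L : ℝ) (hL : 1 ≤ L)
    (h : ∀ (z : Y) (i : Fin n), ∃ l : ℝ → Y, l 0 = z ∧
      (∀ s t : ℝ, L⁻¹ * |s - t| ≤ dist (l s) (l t) ∧ dist (l s) (l t) ≤ L * |s - t|) ∧
      (∀ t : ℝ, G (l t) = G z + t • v i)) :
    Function.Surjective G ∧ ∃ c : ℝ, 0 < c ∧
      ∀ (z : Y) (r : ℝ), 0 < r → ball (G z) (c * r) ⊆ G '' ball z r :=
  lipschitz_quotient_of_biLipschitz_lines_general n G v hv L hL h
end

section
/- Let k be a positive integer, let s be a real number with s > k, and let N ∈ ℕ. Let (X,d) be a metric space for which there is a constant C₀ ≥ 1 with ℋˢ(B̄(x,ρ)) ≥ C₀⁻¹·ρˢ for every x ∈ X and every 0 < ρ ≤ 1. Let V ⊆ X be a set with ℋˢ(N₁(V)) < ∞, where N₁(V) = {y ∈ X : dist(y,V) < 1}. Let φ: X → ℝᵏ and f: X → ℝᴺ be Lipschitz maps, and suppose that for every x ∈ V there exists a linear map D_x: ℝᵏ → ℝᴺ such that lim_{y→x} ‖f(y) − f(x) − D_x(φ(y) − φ(x))‖ / d(x,y)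 = 0. Then ℋˢ(f(V)) = 0. -/
/-!
Split `V` according to the size `p` of the derivative and, for each accuracy `ε`, according to the
scale `δ₀` below which the first-order estimate `‖f y - f x - D (φ y - φ x)‖ ≤ ε d(x,y)` holds.
On such a piece `A`, fix `δ ≤ δ₀`. By the lower mass bound, a maximal `δ`-separated set `T ⊆ A`
has at most `ℋˢ(N₁(V)) / (C₀⁻¹ (δ/2)ˢ)` points, and it is a `δ`-net of `A`. Near `x ∈ T` the image
`f(A)` lies within `εδ` of the affine image `f x + D_x (B̄(0, Lδ))`, which a net of
`≲ (p L / ε)ᵏ` points covers at scale `εδ`. So `f(A)` is covered by `≲ δ⁻ˢ ε⁻ᵏ` balls of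
radius `2εδ`, whence `ℋˢ(f(A)) ≲ εˢ⁻ᵏ`, uniformly in `δ₀`. Letting `ε → 0` uses `k < s`.
-/

open Metric MeasureTheory Filter Topology Function Module
open scoped ENNReal NNReal

theorem div_add_two_pow_mul_rpow_le {a ε δ : ℝ} (ha : 0 ≤ a) (hε : 0 < ε) (hε1 : ε ≤ 1)
    (hδ : 0 ≤ δ) (k : ℕ) (s : ℝ) :
    (a / ε + 2) ^ k * (4 * ε * δ) ^ s ≤ (δ / 2) ^ s * (8 ^ s * (a + 2) ^ k * ε ^ (s - k)) := by
  have hsum : a / ε + 2 ≤ (a + 2) / ε := by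
    rw [add_div]
    gcongr
    exact le_div_self zero_le_two hε hε1
  have hsplit : (4 * ε * δ) ^ s = 8 ^ s * (δ / 2) ^ s * ε ^ s := by
    rw [← Real.mul_rpow (by positivity) (by positivity),
      ← Real.mul_rpow (by positivity) hε.le]
    ring_nf
  calc (a / ε + 2) ^ k * (4 * ε * δ) ^ s ≤ ((a + 2) / ε) ^ k * (8 ^ s * (δ / 2) ^ s * ε ^ s) := by
        rw [hsplit]
        gcongr
    _ = (δ / 2) ^ s * (8 ^ s * (a + 2) ^ k * ε ^ (s - k)) := by
        rw [div_pow, Real.rpow_sub hε, Real.rpow_natCast]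
        field_simp

theorem ENNReal.eq_zero_of_forall_le_mul_ofReal_rpow {a M : ℝ≥0∞} (hM : M ≠ ⊤) {c t : ℝ}
    (ht : 0 < t) (h : ∀ ε : ℝ≥0, 0 < ε → ε ≤ 1 → a ≤ M * ENNReal.ofReal (c * (ε : ℝ) ^ t)) :
    a = 0 := by
  have hlim : Tendsto (fun ε : ℝ≥0 => M * ENNReal.ofReal (c * (ε : ℝ) ^ t)) (𝓝[>] 0) (𝓝 0) := by
    have hpow : Tendsto (fun ε : ℝ≥0 => c * (ε : ℝ) ^ t) (𝓝 0) (𝓝 0) := by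
      simpa [Real.zero_rpow ht.ne'] using
        ((NNReal.continuous_coe.tendsto 0).rpow_const (Or.inr ht.le)).const_mul c
    simpa using ENNReal.Tendsto.const_mul
      (ENNReal.tendsto_ofReal (tendsto_nhdsWithin_of_tendsto_nhds hpow)) (Or.inr hM)
  refine nonpos_iff_eq_zero.1 (ge_of_tendsto hlim ?_)
  filter_upwards [Ioc_mem_nhdsGT zero_lt_one] with ε hε using h ε hε.1 hε.2

namespace Metric

theorem exists_finset_isCover_card_eq_packingNumber {X : Type*} [PseudoEMetricSpace X]
    {ε : ℝ≥0} {A : Set X} (h : packingNumber ε A ≠ ⊤) :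
    ∃ C : Finset X, ↑C ⊆ A ∧ IsCover ε A C ∧ (C.card : ℕ∞) = packingNumber ε A := by
  have hfin : (maximalSeparatedSet ε A).Finite :=
    Set.encard_ne_top_iff.1 (by rwa [encard_maximalSeparatedSet h])
  refine ⟨hfin.toFinset, by simpa using maximalSeparatedSet_subset,
    by simpa using isCover_maximalSeparatedSet h, ?_⟩
  rw [← hfin.encard_eq_coe_toFinset_card, encard_maximalSeparatedSet h]

theorem IsSeparated.encard_mul_le_measure {X : Type*} [MetricSpace X] [MeasurableSpace X]
    [OpensMeasurableSpace X] (μ : Measure X) {ε : ℝ≥0} {C : Set X} (hC : IsSeparated ε C)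
    {m : ℝ≥0∞} (hm : ∀ x ∈ C, m ≤ μ (closedBall x (ε / 2))) :
    (C.encard : ℝ≥0∞) * m ≤ μ (⋃ x ∈ C, closedBall x (ε / 2)) := by
  have hdisj : Pairwise (Disjoint on fun x : C => closedBall (x : X) (ε / 2)) := by
    rintro ⟨x, hx⟩ ⟨y, hy⟩ hxy
    refine Set.disjoint_left.2 fun z hzx hzy => ?_
    have hsep : (ε : ℝ) < dist x y := by
      have : (ε : ℝ≥0∞) < edist x y := hC hx hy (Subtype.coe_injective.ne hxy)
      rwa [edist_nndist, ENNReal.coe_lt_coe, ← NNReal.coe_lt_coe, coe_nndist] at this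
    rw [mem_closedBall] at hzx hzy
    linarith [dist_triangle_left x y z]
  calc (C.encard : ℝ≥0∞) * m = ∑' _ : C, m := by rw [ENNReal.tsum_const]; rfl
    _ ≤ ∑' x : C, μ (closedBall x (ε / 2)) := ENNReal.tsum_le_tsum fun x => hm x x.2
    _ ≤ μ (⋃ x : C, closedBall x (ε / 2)) :=
      tsum_meas_le_meas_iUnion_of_disjoint μ (fun _ => measurableSet_closedBall) hdisj
    _ = μ (⋃ x ∈ C, closedBall x (ε / 2)) := by rw [Set.biUnion_eq_iUnion]

theorem packingNumber_mul_le_measure_thickening {X : Type*} [MetricSpace X]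
    [MeasurableSpace X] [OpensMeasurableSpace X] (μ : Measure X) {ε : ℝ≥0} {δ : ℝ}
    (hεδ : ε / 2 < δ) {A : Set X} {m : ℝ≥0∞} (hm : ∀ x ∈ A, m ≤ μ (closedBall x (ε / 2))) :
    (packingNumber ε A : ℝ≥0∞) * m ≤ μ (thickening δ A) := by
  simp only [packingNumber, ENat.toENNReal_iSup, ENNReal.iSup_mul, iSup_le_iff]
  intro C hCA hC
  refine (hC.encard_mul_le_measure μ fun x hx => hm x (hCA hx)).trans (measure_mono ?_)
  exact Set.iUnion₂_subset fun x hx =>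
    (closedBall_subset_ball hεδ).trans (ball_subset_thickening (hCA hx) δ)

theorem packingNumber_closedBall_le {E : Type*} [NormedAddCommGroup E] [NormedSpace ℝ E]
    [FiniteDimensional ℝ E] {ε : ℝ≥0} (hε : 0 < ε) (x : E) {R : ℝ} (hR : 0 ≤ R) :
    (packingNumber ε (closedBall x R) : ℝ≥0∞) ≤
      ENNReal.ofReal ((2 * R / ε + 2) ^ finrank ℝ E) := by
  borelize E
  set μ : Measure E := Measure.addHaar
  have hε' : (0 : ℝ) < ε := hε
  have hvol := packingNumber_mul_le_measure_thickening μ (half_lt_self hε') (A := closedBall x R)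
    (m := ENNReal.ofReal ((ε / 2) ^ finrank ℝ E) * μ (ball 0 1))
    fun y _ => (Measure.addHaar_closedBall μ y (by positivity)).ge
  rw [thickening_closedBall hε' hR, Measure.addHaar_ball_of_pos μ x (by positivity), ← mul_assoc,
    ENNReal.mul_le_mul_iff_left (measure_ball_pos μ _ one_pos).ne' measure_ball_lt_top.ne,
    ← ENNReal.le_div_iff_mul_le (by simp [hε']) (by simp),
    ← ENNReal.ofReal_div_of_pos (by positivity), ← div_pow] at hvol
  convert hvol using 3
  field_simp
  ring_nf

theorem exists_finset_isCover_card_mul_le_measure {X : Type*} [MetricSpace X]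
    [MeasurableSpace X] [OpensMeasurableSpace X] (μ : Measure X) {ε : ℝ≥0} {δ : ℝ}
    (hεδ : ε / 2 < δ) {A : Set X} {m : ℝ≥0∞} (hm0 : m ≠ 0)
    (hm : ∀ x ∈ A, m ≤ μ (closedBall x (ε / 2))) (hA : μ (thickening δ A) ≠ ⊤) :
    ∃ T : Finset X, ↑T ⊆ A ∧ IsCover ε A ↑T ∧ (T.card : ℝ≥0∞) * m ≤ μ (thickening δ A) := by
  have hpack := packingNumber_mul_le_measure_thickening μ hεδ hm
  have hfin : packingNumber ε A ≠ ⊤ := fun h => hA (top_unique (by simpa [h, hm0] using hpack))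
  obtain ⟨T, hTA, hTcov, hTcard⟩ := exists_finset_isCover_card_eq_packingNumber hfin
  exact ⟨T, hTA, hTcov, by rwa [← ENat.toENNReal_coe, hTcard]⟩

theorem exists_finset_isCover_closedBall_card_le {E : Type*} [NormedAddCommGroup E]
    [NormedSpace ℝ E] [FiniteDimensional ℝ E] {ε : ℝ≥0} (hε : 0 < ε) (x : E) {R : ℝ}
    (hR : 0 ≤ R) : ∃ S : Finset E, IsCover ε (closedBall x R) ↑S ∧
      (S.card : ℝ≥0∞) ≤ ENNReal.ofReal ((2 * R / ε + 2) ^ finrank ℝ E) := by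
  have hpack := packingNumber_closedBall_le hε x hR
  have hfin : packingNumber ε (closedBall x R) ≠ ⊤ := fun h => by simp [h] at hpack
  obtain ⟨S, -, hScov, hScard⟩ := exists_finset_isCover_card_eq_packingNumber hfin
  exact ⟨S, hScov, by rwa [← ENat.toENNReal_coe, hScard]⟩

end Metric

theorem hausdorffMeasure_le_of_forall_isCover {Y : Type*} [EMetricSpace Y] [MeasurableSpace Y]
    [BorelSpace Y] {s : ℝ} (hs : 0 ≤ s) {E : Set Y} {B : ℝ≥0∞}
    (h : ∀ᶠ r in 𝓝[>] (0 : ℝ≥0),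
      ∃ C : Finset Y, IsCover r E C ∧ (C.card : ℝ≥0∞) * (2 * r) ^ s ≤ B) :
    μH[s] E ≤ B := by
  obtain ⟨r₀, hr₀, hcov⟩ := (nhdsGT_basis (0 : ℝ≥0)).eventually_iff.1 h
  choose! C hCcov hCB using fun r (hr : r ∈ Set.Ioo 0 r₀) => hcov hr
  have hsmall : ∀ᶠ r in 𝓝[>] (0 : ℝ≥0), r ∈ Set.Ioo 0 r₀ := Ioo_mem_nhdsGT hr₀
  have hdiam : Tendsto (fun r : ℝ≥0 => 2 * (r : ℝ≥0∞)) (𝓝[>] 0) (𝓝 0) := by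
    have : Continuous (fun r : ℝ≥0 => 2 * (r : ℝ≥0∞)) :=
      (ENNReal.continuous_const_mul (by simp)).comp ENNReal.continuous_coe
    simpa using tendsto_nhdsWithin_of_tendsto_nhds (this.tendsto 0)
  have hle := Measure.hausdorffMeasure_le_liminf_sum s E (fun r : ℝ≥0 => 2 * (r : ℝ≥0∞)) hdiam
    (fun r (y : C r) => closedEBall (y : Y) r)
    (Eventually.of_forall fun r y => ediam_closedEBall_le)
    (hsmall.mono fun r hr => by
      simpa only [Set.iUnion_subtype, Finset.mem_coe] using
        isCover_iff_subset_iUnion_closedEBall.1 (hCcov r hr))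
  refine hle.trans (liminf_le_of_frequently_le' (hsmall.mono fun r hr => ?_).frequently)
  calc ∑ y : C r, ediam (closedEBall (y : Y) r) ^ s ≤ ∑ _y : C r, (2 * (r : ℝ≥0∞)) ^ s :=
        Finset.sum_le_sum fun y _ => ENNReal.rpow_le_rpow ediam_closedEBall_le hs
    _ ≤ B := by simpa using hCB r hr

section LinearApprox

variable {X E F : Type*} [MetricSpace X] [NormedAddCommGroup E] [NormedSpace ℝ E]
  [NormedAddCommGroup F] [NormedSpace ℝ F]

def linearApproxSet (f : X → F) (φ : X → E) (p ε δ : ℝ≥0) : Set X :=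
  {x | ∃ D : E →L[ℝ] F, ‖D‖ ≤ p ∧
    ∀ y, dist x y ≤ δ → ‖f y - f x - D (φ y - φ x)‖ ≤ ε * dist x y}

theorem linearApproxSet_anti (f : X → F) (φ : X → E) (p ε : ℝ≥0) :
    Antitone (linearApproxSet f φ p ε) :=
  fun _ _ hδ _ ⟨D, hDp, hD⟩ => ⟨D, hDp, fun y hy => hD y (hy.trans (mod_cast hδ))⟩

theorem exists_pos_mem_linearApproxSet {f : X → F} {φ : X → E} {x : X} {D : E →L[ℝ] F}
    {p : ℝ≥0} (hDp : ‖D‖ ≤ p)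
    (hD : Tendsto (fun y => ‖f y - f x - D (φ y - φ x)‖ / dist x y) (𝓝[≠] x) (𝓝 0))
    {ε : ℝ≥0} (hε : 0 < ε) : ∃ δ : ℝ≥0, 0 < δ ∧ x ∈ linearApproxSet f φ p ε δ := by
  obtain ⟨δ, hδ, hball⟩ := Metric.mem_nhdsWithin_iff.1 (hD (gt_mem_nhds hε))
  lift δ to ℝ≥0 using hδ.le
  refine ⟨δ / 2, half_pos (mod_cast hδ), D, hDp, fun y hy => ?_⟩
  rcases eq_or_ne y x with rfl | hyx
  · simp
  have hxy : 0 < dist x y := dist_pos.2 hyx.symm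
  have hlt := hball ⟨mem_ball'.2 (hy.trans_lt (by push_cast; exact half_lt_self hδ)), hyx⟩
  exact ((div_lt_iff₀ hxy).1 hlt).le

theorem exists_finset_isCover_image {φ : X → E} {L : ℝ≥0} (hφ : LipschitzWith L φ)
    {f : X → F} {p ε δ : ℝ≥0} {A : Set X} {T : Finset X} {S : Finset E}
    (hTA : ↑T ⊆ linearApproxSet f φ p ε δ) (hT : IsCover δ A ↑T)
    (hS : IsCover (ε * δ / (p + 1)) (closedBall (0 : E) (L * δ)) (S : Set E)) :
    ∃ C : Finset F, IsCover (2 * ε * δ) (f '' A) ↑C ∧ C.card ≤ T.card * S.card := by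
  classical
  choose! D hDp hD using fun x (hx : x ∈ T) => hTA hx
  refine ⟨(T ×ˢ S).image fun q => f q.1 + D q.1 q.2, ?_,
    Finset.card_image_le.trans (Finset.card_product T S).le⟩
  rw [isCover_iff_subset_iUnion_closedBall] at hT hS ⊢
  rintro _ ⟨a, ha, rfl⟩
  obtain ⟨x, hxT, hax⟩ := Set.mem_iUnion₂.1 (hT ha)
  have hxa : dist x a ≤ δ := by rwa [dist_comm, ← mem_closedBall]
  have hφa : φ a - φ x ∈ closedBall 0 (L * δ) := by
    rw [mem_closedBall_zero_iff, ← dist_eq_norm]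
    exact (hφ.dist_le_mul a x).trans (by rw [dist_comm]; gcongr)
  obtain ⟨v, hvS, hv⟩ := Set.mem_iUnion₂.1 (hS hφa)
  refine Set.mem_iUnion₂.2 ⟨f x + D x v,
    Finset.mem_coe.2 (Finset.mem_image.2 ⟨(x, v), Finset.mem_product.2 ⟨hxT, hvS⟩, rfl⟩), ?_⟩
  rw [mem_closedBall, dist_eq_norm, ← dist_eq_norm, ← mem_closedBall] at hv
  rw [mem_closedBall_iff_norm] at hv ⊢
  have hpr : (p : ℝ) * (ε * δ / (p + 1)) ≤ ε * δ := by
    rw [mul_div_assoc', div_le_iff₀ (by positivity)]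
    nlinarith [mul_nonneg ε.coe_nonneg δ.coe_nonneg]
  push_cast at hv ⊢
  calc ‖f a - (f x + D x v)‖ = ‖(f a - f x - D x (φ a - φ x)) + D x (φ a - φ x - v)‖ := by
        simp only [map_sub]; congr 1; abel
    _ ≤ ε * dist x a + ‖D x‖ * ‖φ a - φ x - v‖ :=
        norm_add_le_of_le (hD x hxT a hxa) ((D x).le_opNorm _)
    _ ≤ ε * δ + p * (ε * δ / (p + 1)) := by gcongr; exact hDp x hxT
    _ ≤ 2 * ε * δ := by linarith

end LinearApprox

def HasLowerMassBound (X : Type*) [MetricSpace X] [MeasurableSpace X] [BorelSpace X]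
    (s C₀ : ℝ) : Prop :=
  ∀ (x : X) (ρ : ℝ), 0 < ρ → ρ ≤ 1 → ENNReal.ofReal (C₀⁻¹ * ρ ^ s) ≤ μH[s] (closedBall x ρ)

section LowerMassBound

variable {X E F : Type*} [MetricSpace X] [MeasurableSpace X] [BorelSpace X]
  [NormedAddCommGroup E] [NormedSpace ℝ E] [FiniteDimensional ℝ E]
  [NormedAddCommGroup F] [NormedSpace ℝ F]
  {s C₀ : ℝ} {V : Set X} {φ : X → E} {L : ℝ≥0}

theorem exists_finset_isCover_image_linearApproxSet (hC₀ : 0 < C₀)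
    (hlow : HasLowerMassBound X s C₀) (hV : μH[s] (thickening 1 V) ≠ ⊤)
    (hφ : LipschitzWith L φ) (f : X → F)
    {p ε δ₀ δ : ℝ≥0} (hε : 0 < ε) (hε1 : ε ≤ 1) (hδ : 0 < δ) (hδδ₀ : δ ≤ δ₀) (hδ1 : δ ≤ 1) :
    ∃ C : Finset F, IsCover (2 * ε * δ) (f '' (V ∩ linearApproxSet f φ p ε δ₀)) C ∧
      (C.card : ℝ≥0∞) * (2 * ((2 * ε * δ : ℝ≥0) : ℝ≥0∞)) ^ s ≤ μH[s] (thickening 1 V) *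
        ENNReal.ofReal (C₀ * 8 ^ s * (2 * L * (p + 1) + 2) ^ finrank ℝ E *
          (ε : ℝ) ^ (s - finrank ℝ E)) := by
  set A := V ∩ linearApproxSet f φ p ε δ₀
  set k := finrank ℝ E
  set K := C₀ * 8 ^ s * (2 * L * (p + 1) + 2) ^ k * (ε : ℝ) ^ (s - k)
  set m := ENNReal.ofReal (C₀⁻¹ * ((δ : ℝ) / 2) ^ s)
  have hδ' : (0 : ℝ) < δ := hδ
  have hδ1' : (δ : ℝ) ≤ 1 := hδ1
  have hAV : μH[s] (thickening 1 A) ≤ μH[s] (thickening 1 V) :=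
    measure_mono (thickening_subset_of_subset 1 Set.inter_subset_left)
  obtain ⟨T, hTA, hTcov, hT⟩ := exists_finset_isCover_card_mul_le_measure μH[s]
    (by linarith : (δ : ℝ) / 2 < 1) (ENNReal.ofReal_pos.2 (by positivity)).ne'
    (fun x _ => hlow x _ (by positivity) (by linarith)) (ne_top_of_le_ne_top hV hAV)
  obtain ⟨S, hScov, hScard⟩ := exists_finset_isCover_closedBall_card_le (E := E)
    (by positivity : 0 < ε * δ / (p + 1)) 0 (by positivity : (0 : ℝ) ≤ L * δ)
  obtain ⟨C, hC, hCcard⟩ := exists_finset_isCover_image hφ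
    (hTA.trans (Set.inter_subset_right.trans (linearApproxSet_anti f φ p ε hδδ₀))) hTcov hScov
  refine ⟨C, hC, ?_⟩
  have hS : (S.card : ℝ≥0∞) * ENNReal.ofReal ((4 * ε * δ : ℝ) ^ s) ≤ m * ENNReal.ofReal K := by
    refine (mul_le_mul_of_nonneg_right hScard zero_le).trans ?_
    rw [← ENNReal.ofReal_mul (by positivity), ← ENNReal.ofReal_mul (by positivity)]
    refine ENNReal.ofReal_le_ofReal ?_
    have hratio : 2 * (L * δ : ℝ) / ((ε * δ / (p + 1) : ℝ≥0) : ℝ) = 2 * L * (p + 1) / ε := by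
      push_cast
      field_simp
    calc _ ≤ ((δ : ℝ) / 2) ^ s * (8 ^ s * (2 * L * (p + 1) + 2) ^ k * (ε : ℝ) ^ (s - k)) := by
          rw [hratio]
          exact div_add_two_pow_mul_rpow_le (by positivity) hε hε1 hδ'.le _ _
      _ = C₀⁻¹ * ((δ : ℝ) / 2) ^ s * K := by simp only [K]; field_simp
  have hdiam : (2 * ((2 * ε * δ : ℝ≥0) : ℝ≥0∞)) ^ s = ENNReal.ofReal ((4 * ε * δ : ℝ) ^ s) := by
    rw [← ENNReal.ofReal_rpow_of_pos (by positivity),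
      show (4 * ε * δ : ℝ) = ((4 * ε * δ : ℝ≥0) : ℝ) by push_cast; ring,
      ENNReal.ofReal_coe_nnreal]
    push_cast
    ring_nf
  calc (C.card : ℝ≥0∞) * (2 * ((2 * ε * δ : ℝ≥0) : ℝ≥0∞)) ^ s
      ≤ T.card * (S.card * ENNReal.ofReal ((4 * ε * δ : ℝ) ^ s)) := by
        rw [hdiam, ← mul_assoc]
        gcongr
        exact_mod_cast hCcard
    _ ≤ T.card * (m * ENNReal.ofReal K) := by gcongr
    _ = T.card * m * ENNReal.ofReal K := (mul_assoc _ _ _).symm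
    _ ≤ μH[s] (thickening 1 V) * ENNReal.ofReal K := by gcongr; exact hT.trans hAV

theorem hausdorffMeasure_image_linearApproxSet_le [MeasurableSpace F] [BorelSpace F]
    (hs : 0 ≤ s) (hC₀ : 0 < C₀)
    (hlow : HasLowerMassBound X s C₀) (hV : μH[s] (thickening 1 V) ≠ ⊤)
    (hφ : LipschitzWith L φ) (f : X → F)
    {p ε δ₀ : ℝ≥0} (hε : 0 < ε) (hε1 : ε ≤ 1) (hδ₀ : 0 < δ₀) :
    μH[s] (f '' (V ∩ linearApproxSet f φ p ε δ₀)) ≤ μH[s] (thickening 1 V) *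
      ENNReal.ofReal (C₀ * 8 ^ s * (2 * L * (p + 1) + 2) ^ finrank ℝ E *
        (ε : ℝ) ^ (s - finrank ℝ E)) := by
  refine hausdorffMeasure_le_of_forall_isCover hs ?_
  filter_upwards [Ioo_mem_nhdsGT (show 0 < 2 * ε * min δ₀ 1 by positivity)] with r hr
  have h2ε : 0 < 2 * ε := by positivity
  have hδ : r / (2 * ε) ≤ min δ₀ 1 := by
    rw [div_le_iff₀ h2ε, mul_comm]
    exact hr.2.le
  obtain ⟨C, hC, hCB⟩ := exists_finset_isCover_image_linearApproxSet hC₀ hlow hV hφ f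
    (p := p) hε hε1 (div_pos hr.1 h2ε) (hδ.trans (min_le_left _ _)) (hδ.trans (min_le_right _ _))
  rw [mul_div_cancel₀ _ h2ε.ne'] at hC hCB
  exact ⟨C, hC, hCB⟩

theorem hausdorffMeasure_image_eq_zero_of_tendsto [MeasurableSpace F] [BorelSpace F]
    (hs : (finrank ℝ E : ℝ) < s) (hC₀ : 0 < C₀)
    (hlow : HasLowerMassBound X s C₀) (hV : μH[s] (thickening 1 V) ≠ ⊤)
    (hφ : LipschitzWith L φ) (f : X → F)
    {W : Set X} (hWV : W ⊆ V) (p : ℝ≥0)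
    (hW : ∀ x ∈ W, ∃ D : E →L[ℝ] F, ‖D‖ ≤ p ∧
      Tendsto (fun y => ‖f y - f x - D (φ y - φ x)‖ / dist x y) (𝓝[≠] x) (𝓝 0)) :
    μH[s] (f '' W) = 0 := by
  refine ENNReal.eq_zero_of_forall_le_mul_ofReal_rpow hV (sub_pos.2 hs)
    (c := C₀ * 8 ^ s * (2 * L * (p + 1) + 2) ^ finrank ℝ E) fun ε hε hε1 => ?_
  set A : ℕ → Set X := fun n => V ∩ linearApproxSet f φ p ε (1 / (n + 1))
  have hWA : W ⊆ ⋃ n, A n := by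
    intro x hx
    obtain ⟨D, hDp, hD⟩ := hW x hx
    obtain ⟨δ, hδ, hxδ⟩ := exists_pos_mem_linearApproxSet hDp hD hε
    obtain ⟨n, hn⟩ := exists_nat_one_div_lt hδ
    exact Set.mem_iUnion.2 ⟨n, hWV hx, linearApproxSet_anti f φ p ε hn.le hxδ⟩
  have hA : Monotone A := fun n n' h => Set.inter_subset_inter_right _
    (linearApproxSet_anti f φ p ε (Nat.one_div_le_one_div h))
  calc μH[s] (f '' W) ≤ μH[s] (⋃ n, f '' A n) := by
        rw [← Set.image_iUnion]
        exact measure_mono (Set.image_mono hWA)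
    _ = ⨆ n, μH[s] (f '' A n) := Monotone.measure_iUnion fun _ _ h => Set.image_mono (hA h)
    _ ≤ _ := iSup_le fun n => hausdorffMeasure_image_linearApproxSet_le
        ((Nat.cast_nonneg _).trans hs.le) hC₀ hlow hV hφ f hε hε1 (by positivity)

end LowerMassBound

theorem image_null_of_differentiable_through_low_dimension_general
    {X : Type*} [MetricSpace X] [MeasurableSpace X] [BorelSpace X]
    (k : ℕ) (s : ℝ) (hs : (k : ℝ) < s) (N : ℕ)
    (C₀ : ℝ) (hC₀ : 1 ≤ C₀)
    (hlow : ∀ (x : X) (ρ : ℝ), 0 < ρ → ρ ≤ 1 →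
      ENNReal.ofReal (C₀⁻¹ * ρ ^ s) ≤ μH[s] (closedBall x ρ))
    (V : Set X) (hV : μH[s] (Metric.thickening 1 V) < ⊤)
    (φ : X → EuclideanSpace ℝ (Fin k)) (hφ : ∃ K : NNReal, LipschitzWith K φ)
    (f : X → EuclideanSpace ℝ (Fin N))
    (hdiff : ∀ x ∈ V,
      ∃ D : EuclideanSpace ℝ (Fin k) →ₗ[ℝ] EuclideanSpace ℝ (Fin N),
        Tendsto (fun y : X => ‖f y - f x - D (φ y - φ x)‖ / dist x y)
          (𝓝[≠] x) (𝓝 0)) :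
    μH[s] (f '' V) = 0 := by
  obtain ⟨L, hL⟩ := hφ
  have hk : (finrank ℝ (EuclideanSpace ℝ (Fin k)) : ℝ) < s := by rwa [finrank_euclideanSpace_fin]
  have hV_cover : V ⊆ ⋃ p : ℕ, {x ∈ V |
      ∃ D : EuclideanSpace ℝ (Fin k) →L[ℝ] EuclideanSpace ℝ (Fin N), ‖D‖ ≤ (p : ℝ≥0) ∧
        Tendsto (fun y => ‖f y - f x - D (φ y - φ x)‖ / dist x y) (𝓝[≠] x) (𝓝 0)} := by
    intro x hx
    obtain ⟨D, hD⟩ := hdiff x hx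
    set D' := LinearMap.toContinuousLinearMap D
    exact Set.mem_iUnion.2 ⟨⌈‖D'‖⌉₊, hx, D', by simpa using Nat.le_ceil _, hD⟩
  refine measure_mono_null (Set.image_mono hV_cover) ?_
  rw [Set.image_iUnion]
  exact measure_iUnion_null fun p => hausdorffMeasure_image_eq_zero_of_tendsto hk
    (by linarith) hlow hV.ne hL f (fun x hx => hx.1) p fun x hx => hx.2

/-- If a space satisfies the lower mass bound `ℋˢ(B̄(x,ρ)) ≥ C₀⁻¹ ρˢ`, and `f`
is a Lipschitz map that is differentiable, through a Lipschitz map `φ` into `ℝᵏ`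
with `k < s`, at every point of a set `V` with `ℋˢ(N₁(V)) < ∞`, then
`ℋˢ(f(V)) = 0`. -/
theorem image_null_of_differentiable_through_low_dimension
    {X : Type*} [MetricSpace X] [MeasurableSpace X] [BorelSpace X]
    (k : ℕ) (hk : 1 ≤ k) (s : ℝ) (hs : (k : ℝ) < s) (N : ℕ)
    (C₀ : ℝ) (hC₀ : 1 ≤ C₀)
    (hlow : ∀ (x : X) (ρ : ℝ), 0 < ρ → ρ ≤ 1 →
      ENNReal.ofReal (C₀⁻¹ * ρ ^ s) ≤ μH[s] (closedBall x ρ))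
    (V : Set X) (hV : μH[s] (Metric.thickening 1 V) < ⊤)
    (φ : X → EuclideanSpace ℝ (Fin k)) (hφ : ∃ K : NNReal, LipschitzWith K φ)
    (f : X → EuclideanSpace ℝ (Fin N)) (hf : ∃ K : NNReal, LipschitzWith K f)
    (hdiff : ∀ x ∈ V,
      ∃ D : EuclideanSpace ℝ (Fin k) →ₗ[ℝ] EuclideanSpace ℝ (Fin N),
        Tendsto (fun y : X => ‖f y - f x - D (φ y - φ x)‖ / dist x y)
          (𝓝[≠] x) (𝓝 0)) :
    μH[s] (f '' V) = 0 :=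
  image_null_of_differentiable_through_low_dimension_general k s hs N C₀ hC₀ hlow V hV φ hφ f hdiff
end

section
/- For every integer k ≥ 1 there is a constant C depending only on k with the following property. Let (X,d) be a metric space, x ∈ X, r > 0, 0 < δ < 1, let f: X → ℝᴺ be 1-Lipschitz, let φ: X → ℝᵏ be any map, and let D: ℝᵏ → ℝᴺ be a linear map such that ‖f(y) − f(x) − D(φ(y) − φ(x))‖ ≤ δ·r for every y ∈ B(x,r). Then there exist at most C·δ^{−k} points p₁,…,p_M ∈ ℝᴺ such that f(B(x,r)) ⊆ ⋃_{i=1}^{M} B̄(pᵢ, 4δr). -/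
/-!
For `y ∈ B(x,r)` put `w = D(φ y - φ x)`. Then `f y` lies within `δr` of `f x + w`, and `w` lies in
the subspace `range D`, of dimension at most `k`, with `‖w‖ ≤ r + δr ≤ 2r` since `f` is
`1`-Lipschitz. In orthonormal coordinates on `range D`, the cubical grid of spacing `δr/k` meets
the ball of radius `2r` in at most `(7k/δ)^k` points and puts every point of that ball within
`δr/2` of one of them, so the balls of radius `3δr/2 ≤ 4δr` about `f x` plus these grid points
cover `f(B(x,r))`.
-/

open Metric

theorem EuclideanSpace.norm_le_sqrt_card_mul {ι : Type*} [Fintype ι] (x : EuclideanSpace ℝ ι)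
    {c : ℝ} (hc : 0 ≤ c) (h : ∀ i, ‖x i‖ ≤ c) : ‖x‖ ≤ √(Fintype.card ι) * c := by
  calc ‖x‖ = √(∑ i, ‖x i‖ ^ 2) := EuclideanSpace.norm_eq x
    _ ≤ √(∑ _ : ι, c ^ 2) := by gcongr with i; exact h i
    _ = √(Fintype.card ι) * c := by
      rw [Finset.sum_const, Finset.card_univ, nsmul_eq_mul, Real.sqrt_mul (by positivity),
        Real.sqrt_sq hc]

theorem abs_round_le_of_abs_le {t : ℝ} {n : ℤ} (h : |t| ≤ n) : |round t| ≤ n := by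
  have hround : |(round t : ℝ)| < n + 1 := by
    have := abs_sub_round t
    calc |(round t : ℝ)| = |t - (t - round t)| := by rw [sub_sub_cancel]
      _ ≤ |t| + |t - round t| := abs_sub _ _
      _ < n + 1 := by linarith
  exact Int.lt_add_one_iff.1 (by exact_mod_cast hround)

theorem exists_finset_card_le_ceil_pow_cover_closedBall (E : Type*) [NormedAddCommGroup E]
    [InnerProductSpace ℝ E] [FiniteDimensional ℝ E] (R : ℝ) {s : ℝ} (hs : 0 < s) :
    ∃ P : Finset E, P.card ≤ (2 * ⌈R / s⌉₊ + 1) ^ Module.finrank ℝ E ∧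
      closedBall 0 R ⊆ ⋃ p ∈ P, closedBall p (√(Module.finrank ℝ E) * s / 2) := by
  classical
  set d := Module.finrank ℝ E
  set n := ⌈R / s⌉₊
  let e := (stdOrthonormalBasis ℝ E).repr
  let grid : (Fin d → ℤ) → E := fun v ↦ e.symm (WithLp.toLp 2 fun i ↦ s * v i)
  refine ⟨(Fintype.piFinset fun _ ↦ Finset.Icc (-(n : ℤ)) n).image grid,
    Finset.card_image_le.trans ?_, fun u hu ↦ ?_⟩
  · rw [Fintype.card_piFinset, Finset.prod_const, Finset.card_univ, Fintype.card_fin,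
      Int.card_Icc]
    gcongr
    omega
  let v : Fin d → ℤ := fun i ↦ round (e u i / s)
  have hv : v ∈ Fintype.piFinset fun _ ↦ Finset.Icc (-(n : ℤ)) n := by
    refine Fintype.mem_piFinset.2 fun i ↦ Finset.mem_Icc.2 (abs_le.1 (abs_round_le_of_abs_le ?_))
    have hcoord : |e u i| ≤ R :=
      (PiLp.norm_apply_le (e u) i).trans ((e.norm_map u).trans_le (mem_closedBall_zero_iff.1 hu))
    rw [abs_div, abs_of_pos hs, Int.cast_natCast]
    exact (div_le_div_of_nonneg_right hcoord hs.le).trans (Nat.le_ceil _)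
  refine Set.mem_biUnion (Finset.mem_image_of_mem grid hv) ?_
  rw [mem_closedBall, ← e.dist_map, LinearIsometryEquiv.apply_symm_apply, dist_eq_norm,
    mul_div_assoc, ← Fintype.card_fin d]
  refine EuclideanSpace.norm_le_sqrt_card_mul _ (by positivity) fun i ↦ ?_
  have hsv : e u i - s * v i = s * (e u i / s - round (e u i / s)) := by
    rw [mul_sub, mul_div_cancel₀ _ hs.ne']
  rw [PiLp.sub_apply, Real.norm_eq_abs, hsv, abs_mul, abs_of_pos hs]
  linarith [mul_le_mul_of_nonneg_left (abs_sub_round (e u i / s)) hs.le]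

theorem two_mul_ceil_add_one_pow_le {k d : ℕ} (hk : 1 ≤ k) (hdk : d ≤ k) {δ : ℝ} (hδ : 0 < δ)
    (hδ1 : δ ≤ 1) : ((2 * ⌈2 * k / δ⌉₊ + 1 : ℕ) : ℝ) ^ d ≤ (7 * k) ^ k / δ ^ k := by
  have hk1 : (1 : ℝ) ≤ k := by exact_mod_cast hk
  have hbase : ((2 * ⌈2 * k / δ⌉₊ + 1 : ℕ) : ℝ) ≤ 7 * k / δ := by
    have hceil := Nat.ceil_lt_add_one (by positivity : 0 ≤ 2 * (k : ℝ) / δ)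
    have h3 : 3 ≤ 3 * (k : ℝ) / δ := by rw [le_div_iff₀ hδ]; nlinarith
    push_cast
    calc 2 * (⌈2 * k / δ⌉₊ : ℝ) + 1 ≤ 2 * (2 * k / δ + 1) + 1 := by linarith
      _ = 4 * k / δ + 3 := by ring
      _ ≤ 7 * k / δ := by linarith [show 7 * (k : ℝ) / δ = 4 * k / δ + 3 * k / δ by ring]
  calc ((2 * ⌈2 * k / δ⌉₊ + 1 : ℕ) : ℝ) ^ d ≤ ((2 * ⌈2 * k / δ⌉₊ + 1 : ℕ) : ℝ) ^ k :=
        pow_le_pow_right₀ (by norm_cast; omega) hdk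
    _ ≤ (7 * k / δ) ^ k := by gcongr
    _ = (7 * k) ^ k / δ ^ k := div_pow _ _ _

theorem exists_finset_card_le_div_pow_cover_closedBall {E : Type*} [NormedAddCommGroup E]
    [InnerProductSpace ℝ E] [FiniteDimensional ℝ E] {k : ℕ} (hk : 1 ≤ k)
    (hE : Module.finrank ℝ E ≤ k) {R δ : ℝ} (hR : 0 < R) (hδ : 0 < δ) (hδ1 : δ ≤ 1) :
    ∃ P : Finset E, (P.card : ℝ) ≤ (7 * k) ^ k / δ ^ k ∧
      closedBall 0 R ⊆ ⋃ p ∈ P, closedBall p (δ * R / 4) := by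
  -- grid spacing `δR/(2k)`: `R/s = 2k/δ`, and the error `√(dim E) s/2` is at most `k s/2 = δR/4`
  obtain ⟨P, hPcard, hPcover⟩ :=
    exists_finset_card_le_ceil_pow_cover_closedBall E R (by positivity : 0 < δ * R / (2 * k))
  refine ⟨P, ?_, hPcover.trans <|
    Set.biUnion_mono subset_rfl fun p _ ↦ closedBall_subset_closedBall ?_⟩
  · rw [show R / (δ * R / (2 * k)) = 2 * k / δ by field_simp] at hPcard
    calc (P.card : ℝ) ≤ ((2 * ⌈2 * k / δ⌉₊ + 1 : ℕ) : ℝ) ^ Module.finrank ℝ E := by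
          rw [← Nat.cast_pow]; exact Nat.cast_le.2 hPcard
      _ ≤ (7 * k) ^ k / δ ^ k := two_mul_ceil_add_one_pow_le hk hE hδ hδ1
  · have hsqrt : √(Module.finrank ℝ E) ≤ k :=
      (Real.sqrt_le_sqrt (by exact_mod_cast hE)).trans (Real.sqrt_le_self_iff.2 (by simp [hk]))
    calc √(Module.finrank ℝ E) * (δ * R / (2 * k)) / 2 ≤ k * (δ * R / (2 * k)) / 2 := by gcongr
      _ = δ * R / 4 := by field_simp; ring

theorem LipschitzWith.exists_mem_range_norm_le_dist_le {X E F : Type*} [PseudoMetricSpace X]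
    [AddCommGroup E] [Module ℝ E] [SeminormedAddCommGroup F] [NormedSpace ℝ F]
    {f : X → F} (hf : LipschitzWith 1 f) (φ : X → E) (D : E →ₗ[ℝ] F) {x y : X} {r η : ℝ}
    (hy : dist y x ≤ r) (hD : ‖f y - f x - D (φ y - φ x)‖ ≤ η) :
    ∃ w ∈ LinearMap.range D, ‖w‖ ≤ r + η ∧ dist (f y) (f x + w) ≤ η := by
  refine ⟨D (φ y - φ x), LinearMap.mem_range_self D _, ?_, ?_⟩
  · calc ‖D (φ y - φ x)‖ ≤ ‖f y - f x‖ + ‖f y - f x - D (φ y - φ x)‖ :=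
          norm_le_norm_add_norm_sub _ _
      _ ≤ r + η := by
        gcongr
        rw [← dist_eq_norm]
        simpa using (hf.dist_le_mul y x).trans (by simpa using hy)
  · rwa [dist_eq_norm, sub_add_eq_sub_sub]

/-- If a `1`-Lipschitz map `f` is approximated on `B(x,r)`, to within `δr`, by an
affine map factoring through `ℝᵏ`, then `f(B(x,r))` can be covered by at most
`C δ⁻ᵏ` closed balls of radius `4δr`, where `C` depends only on `k`. -/
theorem cover_image_of_approximately_affine (k : ℕ) (hk : 1 ≤ k) :
    ∃ C : ℝ, 0 < C ∧
      ∀ (X : Type) [MetricSpace X] (x : X) (r : ℝ), 0 < r →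
      ∀ δ : ℝ, 0 < δ → δ < 1 →
      ∀ (N : ℕ) (f : X → EuclideanSpace ℝ (Fin N)), LipschitzWith 1 f →
      ∀ (φ : X → EuclideanSpace ℝ (Fin k))
        (D : EuclideanSpace ℝ (Fin k) →ₗ[ℝ] EuclideanSpace ℝ (Fin N)),
        (∀ y ∈ ball x r, ‖f y - f x - D (φ y - φ x)‖ ≤ δ * r) →
        ∃ (M : ℕ) (p : Fin M → EuclideanSpace ℝ (Fin N)),
          (M : ℝ) ≤ C / δ ^ k ∧
          f '' ball x r ⊆ ⋃ i : Fin M, closedBall (p i) (4 * δ * r) := by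
  refine ⟨(7 * k) ^ k, by positivity, fun X _ x r hr δ hδ hδ1 N f hf φ D hD ↦ ?_⟩
  obtain ⟨P, hPcard, hPcover⟩ := exists_finset_card_le_div_pow_cover_closedBall
    (E := LinearMap.range D) hk (by simpa using D.finrank_range_le) (by positivity : 0 < 2 * r)
    hδ hδ1.le
  refine ⟨P.card, fun i ↦ f x + P.equivFin.symm i, hPcard, ?_⟩
  rintro _ ⟨y, hy, rfl⟩
  obtain ⟨w, hwD, hw, hfw⟩ := hf.exists_mem_range_norm_le_dist_le φ D (mem_ball.1 hy).le (hD y hy)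
  have hw' : (⟨w, hwD⟩ : LinearMap.range D) ∈ closedBall 0 (2 * r) :=
    mem_closedBall_zero_iff.2 (hw.trans (by nlinarith))
  obtain ⟨p, hpP, hwp⟩ := Set.mem_iUnion₂.1 (hPcover hw')
  refine Set.mem_iUnion.2 ⟨P.equivFin ⟨p, hpP⟩, ?_⟩
  simp only [Equiv.symm_apply_apply, mem_closedBall]
  calc dist (f y) (f x + p) ≤ dist (f y) (f x + w) + dist (f x + w) (f x + p) :=
        dist_triangle _ _ _
    _ ≤ δ * r + δ * (2 * r) / 4 := add_le_add hfw (by rwa [dist_add_left])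
    _ ≤ 4 * δ * r := by linarith [mul_pos hδ hr]
end
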